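/- Let v_0,…,v_k ∈ ℝ_{≥0}×ℝⁿ be linearly independent vectors such that the first coordinate of v_0 is positive. For 0 ≤ i ≤ k let C_i be the cone generated by v_0,…,v_i and let P_i = {x ∈ ℝⁿ : (1,x) ∈ C_i} (so P_• = (P_0 ⊆ ⋯ ⊆ P_k) is a flag of polyhedra in ℝⁿ). Then for every (γ,u) ∈ Γ×ℤⁿ, the half-space {x ∈ ℝⁿ : γ + ⟨x,u⟩ ≤ 0} meets the relative interior of P_i for every 0 ≤ i ≤ k if and only if (⟨v_0,(γ,u)⟩, ⟨v_1,(γ,u)⟩, …, ⟨v_k,(γ,u)⟩) ≤_lex (0,…,0). -/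

import Mathlib

open Finset

noncomputable section

/-- The pairing `⟨w,𝔲⟩ = rγ + ⟨x,u⟩` on `ℝ × ℝⁿ`. -/
def pairE {n : ℕ} (w u : ℝ × (Fin n → ℝ)) : ℝ :=
  w.1 * u.1 + ∑ i, w.2 i * u.2 i

/-- The standard pairing between `ℝⁿ` and `ℤⁿ`. -/
def pairZ {n : ℕ} (x : Fin n → ℝ) (u : Fin n → ℤ) : ℝ :=
  ∑ i, x i * (u i : ℝ)

/-- The cone generated by finitely many vectors. -/
def coneGen {V : Type*} [AddCommMonoid V] [Module ℝ V] {r : ℕ} (v : Fin r → V) : Set V :=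
  {x | ∃ lam : Fin r → ℝ, (∀ j, 0 ≤ lam j) ∧ x = ∑ j, lam j • v j}

/-- The cone generated by `v 0, …, v i` (out of the family `v`). -/
def coneGenUpTo {V : Type*} [AddCommMonoid V] [Module ℝ V] {r : ℕ} (v : Fin r → V) (i : ℕ) :
    Set V :=
  {x | ∃ lam : Fin r → ℝ, (∀ j, 0 ≤ lam j) ∧ (∀ j : Fin r, i < (j : ℕ) → lam j = 0) ∧
    x = ∑ j, lam j • v j}

/-- A strongly convex polyhedral cone: finitely generated and containing no line. -/
def IsSCPCone {V : Type*} [AddCommGroup V] [Module ℝ V] (C : Set V) : Prop :=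
  (∃ r : ℕ, ∃ v : Fin r → V, C = coneGen v) ∧ ∀ x ∈ C, -x ∈ C → x = 0

/-- The dimension of a subset of a vector space: dimension of its linear span. -/
def spanDim {V : Type*} [AddCommGroup V] [Module ℝ V] (C : Set V) : ℕ :=
  Module.finrank ℝ (Submodule.span ℝ C)

/-- `flagPrev C i` is `C (i-1)`, with the convention `C (-1) = {0}`. -/
def flagPrev {V : Type*} [Zero V] (C : ℕ → Set V) : ℕ → Set V
  | 0 => {0}
  | (i + 1) => C i

/-- A flag of cones `C 0 ⊆ ⋯ ⊆ C k` in `ℝ≥0 × ℝⁿ`, with `dim (C i) = i + 1`. -/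
def IsFlagOfCones (n k : ℕ) (C : ℕ → Set (ℝ × (Fin n → ℝ))) : Prop :=
  (∀ i ≤ k, IsSCPCone (C i)) ∧
  (∀ i ≤ k, C i ⊆ {w | 0 ≤ w.1}) ∧
  (∀ i ≤ k, spanDim (C i) = i + 1) ∧
  (∀ i, i + 1 ≤ k → C i ⊆ C (i + 1))

/-- A simplicial flag of cones: a flag of cones in which `C i` is generated by
`v 0, …, v i` for a linearly independent family `v`. -/
def IsSimplicialFlagOfCones (n k : ℕ) (C : ℕ → Set (ℝ × (Fin n → ℝ))) : Prop :=
  IsFlagOfCones n k C ∧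
  ∃ v : Fin (k + 1) → ℝ × (Fin n → ℝ), LinearIndependent ℝ v ∧ ∀ i ≤ k, C i = coneGenUpTo v i

/-- A `Γ`-admissible cone in `ℝ≥0 × ℝⁿ`. -/
def IsGammaAdmissibleCone {n : ℕ} (Γ : AddSubgroup ℝ) (D : Set (ℝ × (Fin n → ℝ))) : Prop :=
  ∃ q : ℕ, ∃ γ : Fin q → ℝ, ∃ u : Fin q → (Fin n → ℤ), (∀ l, γ l ∈ Γ) ∧
    D = {w | 0 ≤ w.1 ∧ ∀ l, w.1 * γ l + pairZ w.2 (u l) ≤ 0}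

/-- A `Γ`-rational polyhedron in `ℝⁿ`. -/
def IsGammaRatPolyhedron {n : ℕ} (Γ : AddSubgroup ℝ) (Q : Set (Fin n → ℝ)) : Prop :=
  ∃ q : ℕ, ∃ u : Fin q → (Fin n → ℤ), ∃ γ : Fin q → ℝ, (∀ l, γ l ∈ Γ) ∧
    Q = {x | ∀ l, pairZ x (u l) ≤ γ l}

/-- A polyhedron in `ℝⁿ`: a finite intersection of closed affine half-spaces. -/
def IsPolyhedron {n : ℕ} (P : Set (Fin n → ℝ)) : Prop :=
  ∃ q : ℕ, ∃ a : Fin q → (Fin n → ℝ), ∃ b : Fin q → ℝ,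
    P = {x | ∀ l, ∑ i, a l i * x i ≤ b l}

/-- A set containing no affine line. -/
def HasNoLine {n : ℕ} (P : Set (Fin n → ℝ)) : Prop :=
  ¬ ∃ x d : Fin n → ℝ, d ≠ 0 ∧ ∀ t : ℝ, x + t • d ∈ P

/-- The dimension of a polyhedron: the dimension of its affine span. -/
def polyDim {n : ℕ} (P : Set (Fin n → ℝ)) : ℕ :=
  Module.finrank ℝ (affineSpan ℝ P).direction

/-- A flag of polyhedra `P 0 ⊆ ⋯ ⊆ P k` in `ℝⁿ`: nonempty polyhedra containing no affine
line, with `dim (P i) = i`. -/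
def IsFlagOfPolyhedra (n k : ℕ) (P : ℕ → Set (Fin n → ℝ)) : Prop :=
  (∀ i ≤ k, (P i).Nonempty ∧ IsPolyhedron (P i) ∧ HasNoLine (P i) ∧ polyDim (P i) = i) ∧
  (∀ i, i + 1 ≤ k → P i ⊆ P (i + 1))

/-- The closed cone over a subset of `ℝⁿ`. -/
def closedConeOver {n : ℕ} (P : Set (Fin n → ℝ)) : Set (ℝ × (Fin n → ℝ)) :=
  closure {w : ℝ × (Fin n → ℝ) | ∃ l : ℝ, ∃ x ∈ P, 0 < l ∧ w = (l, l • x)}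

/-- A `Γ`-rational polyhedral set: a finite union of `Γ`-rational polyhedra. -/
def IsGammaRatPolyhedralSet {n : ℕ} (Γ : AddSubgroup ℝ) (U : Set (Fin n → ℝ)) : Prop :=
  ∃ m : ℕ, ∃ Q : Fin m → Set (Fin n → ℝ), (∀ j, IsGammaRatPolyhedron Γ (Q j)) ∧ U = ⋃ j, Q j

/-- A `Γ`-rational polytope: a bounded `Γ`-rational polyhedron. -/
def IsGammaRatPolytope {n : ℕ} (Γ : AddSubgroup ℝ) (Q : Set (Fin n → ℝ)) : Prop :=
  IsGammaRatPolyhedron Γ Q ∧ Bornology.IsBounded Q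

/-- A `Γ`-rational polytopal set: a finite union of `Γ`-rational polytopes. -/
def IsGammaRatPolytopalSet {n : ℕ} (Γ : AddSubgroup ℝ) (U : Set (Fin n → ℝ)) : Prop :=
  ∃ m : ℕ, ∃ Q : Fin m → Set (Fin n → ℝ), (∀ j, IsGammaRatPolytope Γ (Q j)) ∧ U = ⋃ j, Q j

/-- A prime filter on a lattice `L` of sets (ordered by inclusion, with meet = intersection
and join = union). -/
def IsPrimeFilterOn {α : Type*} (L : Set (Set α)) (F : Set (Set α)) : Prop :=
  F ⊆ L ∧ F.Nonempty ∧ F ≠ L ∧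
  (∀ U ∈ F, ∀ V ∈ L, U ⊆ V → V ∈ F) ∧
  (∀ U ∈ F, ∀ V ∈ F, U ∩ V ∈ F) ∧
  (∀ U ∈ L, ∀ V ∈ L, U ∪ V ∈ F → U ∈ F ∨ V ∈ F)

/-- `D` is a `Γ`-admissible neighborhood of the flag of cones `C 0 ⊆ ⋯ ⊆ C k`. -/
def IsGammaAdmNbhd {n : ℕ} (Γ : AddSubgroup ℝ) (k : ℕ) (C : ℕ → Set (ℝ × (Fin n → ℝ)))
    (D : Set (ℝ × (Fin n → ℝ))) : Prop :=
  IsGammaAdmissibleCone Γ D ∧ ∀ i ≤ k, (D ∩ intrinsicInterior ℝ (C i)).Nonempty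

/-- `Q` is a `Γ`-rational neighborhood of the flag of polyhedra `P 0 ⊆ ⋯ ⊆ P k`. -/
def IsGammaRatNbhd {n : ℕ} (Γ : AddSubgroup ℝ) (k : ℕ) (P : ℕ → Set (Fin n → ℝ))
    (Q : Set (Fin n → ℝ)) : Prop :=
  IsGammaRatPolyhedron Γ Q ∧ ∀ i ≤ k, (Q ∩ intrinsicInterior ℝ (P i)).Nonempty

/-- The lexicographic comparison of pairings against points `w 0, …, w k`. -/
def lexRel (n k : ℕ) (w : ℕ → ℝ × (Fin n → ℝ)) (a b : ℝ × (Fin n → ℝ)) : Prop :=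
  toLex (fun i : Fin (k + 1) => pairE (w i) a) ≤ toLex (fun i : Fin (k + 1) => pairE (w i) b)

/-- The embedding of `Γ × ℤⁿ` into `ℝ × ℝⁿ`. -/
def embGZ {n : ℕ} (Γ : AddSubgroup ℝ) (a : Γ × (Fin n → ℤ)) : ℝ × (Fin n → ℝ) :=
  ((a.1 : ℝ), fun i => (a.2 i : ℝ))

/-- The preorder on `Γ × ℤⁿ` associated to a (simplicial flag of cones with) chosen points
`w 0, …, w k`. -/
def flagRel (n k : ℕ) (Γ : AddSubgroup ℝ) (w : ℕ → ℝ × (Fin n → ℝ))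
    (a b : Γ × (Fin n → ℤ)) : Prop :=
  lexRel n k w (embGZ Γ a) (embGZ Γ b)

/-- `w` is a choice of points for the flag `C`: `w i ∈ C i \ C (i-1)` for `i ≤ k`. -/
def IsChoiceOfPoints (n k : ℕ) (C : ℕ → Set (ℝ × (Fin n → ℝ)))
    (w : ℕ → ℝ × (Fin n → ℝ)) : Prop :=
  ∀ i ≤ k, w i ∈ C i \ flagPrev C i

/-- A valuated monomial preorder on `Γ × ℤⁿ`. -/
def IsValuatedMonomialPreorder {n : ℕ} (Γ : AddSubgroup ℝ)
    (r : (Γ × (Fin n → ℤ)) → (Γ × (Fin n → ℤ)) → Prop) : Prop :=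
  (∀ a, r a a) ∧ (∀ a b c, r a b → r b c → r a c) ∧ (∀ a b, r a b ∨ r b a) ∧
  (∀ a b c, r a b → r (a + c) (b + c)) ∧
  (∀ α β : Γ, (α : ℝ) ≤ (β : ℝ) → r (α, 0) (β, 0))

/-- A Chan–Maclagan preorder on `Γ × ℤⁿ`. -/
def IsChanMaclaganPreorder {n : ℕ} (Γ : AddSubgroup ℝ)
    (r : (Γ × (Fin n → ℤ)) → (Γ × (Fin n → ℤ)) → Prop) : Prop :=
  IsValuatedMonomialPreorder Γ r ∧ ∀ a, ∃ β : Γ, r (β, 0) a ∧ ¬ r a (β, 0)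

/-! Write `c j = ⟨v j, (γ, u)⟩`. If `(1, x) = ∑ j, μ j • v j` then `γ + ⟨x, u⟩ = ∑ j, μ j * c j`.
The relative interior of `P i` consists of the `x` whose coefficients `μ 0, …, μ i` are all
positive (a coordinate vanishing at a relative interior point vanishes on all of `P i`), and since
`v 0` has positive height, every such positive combination rescales into `P i`. Hence the
half-space meets the relative interior of `P i` iff `∑ j, μ j * c j ≤ 0` for some `μ` positive on
`0, …, i` and zero beyond, and this holds for every `i` exactly when `c ≤ₗₑₓ 0`: a first nonzero
`c l < 0` can be given a dominating weight, while a first nonzero `c l > 0` makes every such sum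
with `i = l` positive. -/

open Filter Topology

lemma LinearIndependent.exists_linearMap_sum_smul_eq {ι K V : Type*} [Fintype ι] [DivisionRing K]
    [AddCommGroup V] [Module K V] {v : ι → V} (hv : LinearIndependent K v) :
    ∃ R : V →ₗ[K] ι → K, ∀ c, R (∑ i, c i • v i) = c := by
  obtain ⟨R, hR⟩ := (Fintype.linearCombination K v).exists_leftInverse_of_injective
    (LinearMap.ker_eq_bot.2 hv.fintypeLinearCombination_injective)
  exact ⟨R, fun c => by simpa [Fintype.linearCombination_apply] using LinearMap.congr_fun hR c⟩

section IntrinsicInterior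

variable {E : Type*} [AddCommGroup E] [Module ℝ E] [TopologicalSpace E] {s U : Set E} {x y : E}

lemma mem_intrinsicInterior_of_isOpen (hxs : x ∈ s) (hU : IsOpen U) (hxU : x ∈ U)
    (hUs : ∀ y ∈ affineSpan ℝ s, y ∈ U → y ∈ s) : x ∈ intrinsicInterior ℝ s :=
  mem_intrinsicInterior.2 ⟨⟨x, subset_affineSpan ℝ s hxs⟩,
    mem_interior.2 ⟨((↑) : affineSpan ℝ s → E) ⁻¹' U, fun y hy => hUs y y.2 hy,
      hU.preimage continuous_subtype_val, hxU⟩, rfl⟩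

variable [IsTopologicalAddGroup E] [ContinuousSMul ℝ E]

lemma exists_pos_add_smul_sub_mem_of_mem_intrinsicInterior (hx : x ∈ intrinsicInterior ℝ s)
    (hy : y ∈ affineSpan ℝ s) : ∃ t : ℝ, 0 < t ∧ x + t • (x - y) ∈ s := by
  obtain ⟨x', hx', rfl⟩ := mem_intrinsicInterior.1 hx
  have hmem (t : ℝ) : (x' : E) + t • ((x' : E) - y) ∈ affineSpan ℝ s := by
    simpa [vsub_eq_sub, vadd_eq_add, add_comm] using
      AffineSubspace.smul_vsub_vadd_mem _ t x'.2 hy x'.2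
  let line : ℝ → affineSpan ℝ s := fun t => ⟨_, hmem t⟩
  have hline : Continuous line := Continuous.subtype_mk (by fun_prop) _
  have hnear : ∀ᶠ t in 𝓝 0, line t ∈ interior ((↑) ⁻¹' s) :=
    hline.continuousAt.eventually_mem (by simpa [line] using isOpen_interior.mem_nhds hx')
  obtain ⟨t, hts, ht⟩ := ((hnear.filter_mono nhdsWithin_le_nhds).and
    (self_mem_nhdsWithin : Set.Ioi (0 : ℝ) ∈ 𝓝[>] 0)).exists
  exact ⟨t, ht, interior_subset (s := ((↑) : affineSpan ℝ s → E) ⁻¹' s) hts⟩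

lemma AffineMap.eq_zero_of_nonneg_of_mem_intrinsicInterior (f : E →ᵃ[ℝ] ℝ)
    (hf : ∀ z ∈ s, 0 ≤ f z) (hx : x ∈ intrinsicInterior ℝ s) (hfx : f x = 0) (hy : y ∈ s) :
    f y = 0 := by
  obtain ⟨t, ht, hts⟩ :=
    exists_pos_add_smul_sub_mem_of_mem_intrinsicInterior hx (subset_affineSpan ℝ s hy)
  have hline : f (x + t • (x - y)) = -(t * f y) := by
    rw [show x + t • (x - y) = t • (x -ᵥ y) +ᵥ x by simp [add_comm], f.map_vadd,
      map_smul, f.linearMap_vsub, hfx]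
    simp
  nlinarith [hf _ hts, hf y hy]

end IntrinsicInterior

section Lex

variable {m : ℕ}

def IsPosUpTo (i : ℕ) (μ : Fin m → ℝ) : Prop :=
  (∀ j : Fin m, (j : ℕ) ≤ i → 0 < μ j) ∧ ∀ j : Fin m, i < (j : ℕ) → μ j = 0

lemma IsPosUpTo.nonneg {i : ℕ} {μ : Fin m → ℝ} (hμ : IsPosUpTo i μ) (j : Fin m) : 0 ≤ μ j := by
  rcases le_or_gt (j : ℕ) i with h | h
  · exact (hμ.1 j h).le
  · exact (hμ.2 j h).ge

lemma isPosUpTo_indicator (i : ℕ) :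
    IsPosUpTo i (fun j : Fin m => if (j : ℕ) ≤ i then (1 : ℝ) else 0) :=
  ⟨fun j hj => by simp [hj], fun j hj => by simp [hj.not_ge]⟩

lemma exists_isPosUpTo_sum_eq_zero {i : ℕ} {c : Fin m → ℝ}
    (hc : ∀ j : Fin m, (j : ℕ) ≤ i → c j = 0) :
    ∃ μ, IsPosUpTo i μ ∧ ∑ j, μ j * c j = 0 :=
  ⟨_, isPosUpTo_indicator i, Finset.sum_eq_zero fun j _ => by split_ifs with h <;> simp [hc j, h]⟩

lemma exists_isPosUpTo_sum_nonpos_of_neg {i : ℕ} {c : Fin m → ℝ} {l : Fin m}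
    (hl : (l : ℕ) ≤ i) (hcl : c l < 0) :
    ∃ μ, IsPosUpTo i μ ∧ ∑ j, μ j * c j ≤ 0 := by
  set ν : Fin m → ℝ := fun j => if (j : ℕ) ≤ i then 1 else 0
  set S := ∑ j, ν j * c j
  -- raising the weight of `l` by `|S| / (-c l)` lowers the sum by `|S|`
  set t := |S| / -c l
  have ht : 0 ≤ t := div_nonneg (abs_nonneg S) (by linarith)
  set μ : Fin m → ℝ := ν + Pi.single l t
  refine ⟨μ, ⟨fun j hj => ?_, fun j hj => ?_⟩, ?_⟩
  · have : 0 ≤ (Pi.single l t : Fin m → ℝ) j := by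
      rcases eq_or_ne j l with rfl | h <;> simp [*]
    simpa [μ, ν, hj] using add_pos_of_pos_of_nonneg one_pos this
  · have : j ≠ l := by rintro rfl; omega
    simp [μ, ν, hj.not_ge, this]
  · have hsum : ∑ j, μ j * c j = S + t * c l := by
      simp [μ, add_mul, Finset.sum_add_distrib, S, Pi.single_apply]
    have : t * c l = -|S| := by
      rw [div_mul_eq_mul_div, div_neg, mul_div_assoc, div_self hcl.ne, mul_one]
    rw [hsum, this]
    linarith [le_abs_self S]

lemma sum_mul_pos_of_isPosUpTo {c μ : Fin m → ℝ} {l : Fin m} (hμ : IsPosUpTo l μ)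
    (hc : ∀ j < l, c j = 0) (hcl : 0 < c l) : 0 < ∑ j, μ j * c j := by
  rw [Finset.sum_eq_single l]
  · exact mul_pos (hμ.1 l le_rfl) hcl
  · intro j _ hjl
    rcases lt_or_gt_of_ne hjl with h | h
    · simp [hc j h]
    · simp [hμ.2 j h]
  · simp

theorem toLex_le_zero_iff_forall_exists_isPosUpTo (c : Fin m → ℝ) :
    toLex c ≤ toLex 0 ↔ ∀ i < m, ∃ μ, IsPosUpTo i μ ∧ ∑ j, μ j * c j ≤ 0 := by
  constructor
  · intro hc i hi
    rcases hc.lt_or_eq with ⟨l, hzero, hneg⟩ | heq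
    · by_cases hli : (l : ℕ) ≤ i
      · exact exists_isPosUpTo_sum_nonpos_of_neg hli hneg
      · obtain ⟨μ, hμ, hsum⟩ := exists_isPosUpTo_sum_eq_zero (i := i) (c := c)
          fun j hj => hzero j (by omega)
        exact ⟨μ, hμ, hsum.le⟩
    · obtain ⟨μ, hμ, hsum⟩ := exists_isPosUpTo_sum_eq_zero (i := i) (c := c)
        fun j _ => congrFun (toLex_inj.mp heq) j
      exact ⟨μ, hμ, hsum.le⟩
  · intro h
    by_contra hc
    obtain ⟨l, hzero, hpos⟩ := lt_of_not_ge hc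
    obtain ⟨μ, hμ, hsum⟩ := h l l.isLt
    exact hsum.not_gt (sum_mul_pos_of_isPosUpTo hμ (fun j hj => (hzero j hj).symm) hpos)

end Lex

section OpenCone

variable {V : Type*} [AddCommMonoid V] [Module ℝ V] {m : ℕ} {v : Fin m → V} {i : ℕ}

/-- For linearly independent `v`, the relative interior of `coneGenUpTo v i`. -/
def openConeUpTo (v : Fin m → V) (i : ℕ) : Set V :=
  {w | ∃ μ, IsPosUpTo i μ ∧ w = ∑ j, μ j • v j}

lemma openConeUpTo_subset_coneGenUpTo : openConeUpTo v i ⊆ coneGenUpTo v i :=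
  fun _ ⟨μ, hμ, hw⟩ => ⟨μ, hμ.nonneg, hμ.2, hw⟩

lemma openConeUpTo_nonempty : (openConeUpTo v i).Nonempty :=
  ⟨_, _, isPosUpTo_indicator i, rfl⟩

lemma smul_mem_openConeUpTo {t : ℝ} {w : V} (ht : 0 < t) (hw : w ∈ openConeUpTo v i) :
    t • w ∈ openConeUpTo v i := by
  obtain ⟨μ, hμ, rfl⟩ := hw
  refine ⟨t • μ, ⟨fun j hj => mul_pos ht (hμ.1 j hj), fun j hj => by simp [hμ.2 j hj]⟩, ?_⟩
  simp [Finset.smul_sum, smul_smul]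

end OpenCone

section Slice

variable {E : Type*} [NormedAddCommGroup E] [NormedSpace ℝ E] {m : ℕ}
  {v : Fin m → ℝ × E} {i : ℕ} {x y : E}

def atHeightOne : E →ᵃ[ℝ] ℝ × E :=
  AffineMap.const ℝ E ((1 : ℝ), (0 : E)) + (LinearMap.inr ℝ ℝ E).toAffineMap

@[simp]
lemma atHeightOne_apply (x : E) : atHeightOne x = ((1 : ℝ), x) := by
  simp [atHeightOne]

lemma exists_eq_sum_of_mem_affineSpan
    (hy : y ∈ affineSpan ℝ {x : E | ((1 : ℝ), x) ∈ coneGenUpTo v i}) :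
    ∃ ν : Fin m → ℝ, (∀ j : Fin m, i < (j : ℕ) → ν j = 0) ∧ ((1 : ℝ), y) = ∑ j, ν j • v j := by
  set S := Submodule.span ℝ (v '' {j | (j : ℕ) ≤ i})
  have hle : affineSpan ℝ {x : E | ((1 : ℝ), x) ∈ coneGenUpTo v i} ≤
      S.toAffineSubspace.comap atHeightOne := by
    refine affineSpan_le.2 fun x ⟨μ, _, hμ, hx⟩ => ?_
    simp only [SetLike.mem_coe, AffineSubspace.mem_comap, atHeightOne_apply,
      Submodule.mem_toAffineSubspace, hx]
    refine Submodule.sum_mem _ fun j _ => ?_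
    rcases le_or_gt (j : ℕ) i with h | h
    · exact S.smul_mem _ (Submodule.subset_span ⟨j, h, rfl⟩)
    · simp [hμ j h]
  have hyS : ((1 : ℝ), y) ∈ S := by
    simpa using hle hy
  obtain ⟨l, hl, hly⟩ := (Finsupp.mem_span_image_iff_linearCombination ℝ).1 hyS
  refine ⟨l, fun j hj => (Finsupp.mem_supported' ℝ l).1 hl j (by simpa using hj), ?_⟩
  rw [← hly, Finsupp.linearCombination_apply, Finsupp.sum_fintype _ _ (by simp)]

variable [FiniteDimensional ℝ E]

lemma mem_intrinsicInterior_of_mem_openConeUpTo (hv : LinearIndependent ℝ v)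
    (hx : ((1 : ℝ), x) ∈ openConeUpTo v i) :
    x ∈ intrinsicInterior ℝ {x : E | ((1 : ℝ), x) ∈ coneGenUpTo v i} := by
  obtain ⟨R, hR⟩ := hv.exists_linearMap_sum_smul_eq
  have hRc (j : Fin m) : Continuous fun y : E => R ((1 : ℝ), y) j :=
    (continuous_apply j).comp
      (R.continuous_of_finiteDimensional.comp (continuous_const.prodMk continuous_id))
  set U := ⋂ (j : Fin m) (_ : (j : ℕ) ≤ i), {y : E | 0 < R ((1 : ℝ), y) j}
  have hU : IsOpen U := isOpen_iInter_of_finite fun j =>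
    isOpen_iInter_of_finite fun _ => isOpen_lt continuous_const (hRc j)
  obtain ⟨μ, hμ, hxμ⟩ := hx
  refine mem_intrinsicInterior_of_isOpen (openConeUpTo_subset_coneGenUpTo ⟨μ, hμ, hxμ⟩) hU
    (by simpa [U, hxμ, hR] using hμ.1) fun y hy hyU => ?_
  obtain ⟨ν, hν, hyν⟩ := exists_eq_sum_of_mem_affineSpan hy
  have hνpos : IsPosUpTo i ν := by
    refine ⟨fun j hj => ?_, hν⟩
    simpa [hyν, hR] using Set.mem_iInter₂.1 hyU j hj
  exact openConeUpTo_subset_coneGenUpTo ⟨ν, hνpos, hyν⟩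

end Slice

section PositiveHeight

variable {E : Type*} [NormedAddCommGroup E] [NormedSpace ℝ E] {k : ℕ}
  {v : Fin (k + 1) → ℝ × E} {i : ℕ} {w : ℝ × E} {x : E}

lemma fst_pos_of_mem_openConeUpTo (hv0 : 0 < (v 0).1) (hvpos : ∀ j, 0 ≤ (v j).1)
    (hw : w ∈ openConeUpTo v i) : 0 < w.1 := by
  obtain ⟨μ, hμ, rfl⟩ := hw
  simp only [Prod.fst_sum, Prod.smul_fst, smul_eq_mul]
  exact Finset.sum_pos' (fun j _ => mul_nonneg (hμ.nonneg j) (hvpos j))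
    ⟨0, Finset.mem_univ _, mul_pos (hμ.1 0 (Nat.zero_le i)) hv0⟩

lemma one_prod_eq_inv_smul (hw : w.1 ≠ 0) : ((1 : ℝ), w.1⁻¹ • w.2) = w.1⁻¹ • w :=
  Prod.ext (inv_mul_cancel₀ hw).symm rfl

lemma one_prod_mem_openConeUpTo (hv0 : 0 < (v 0).1) (hvpos : ∀ j, 0 ≤ (v j).1)
    (hw : w ∈ openConeUpTo v i) : ((1 : ℝ), w.1⁻¹ • w.2) ∈ openConeUpTo v i := by
  have h := fst_pos_of_mem_openConeUpTo hv0 hvpos hw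
  rw [one_prod_eq_inv_smul h.ne']
  exact smul_mem_openConeUpTo (inv_pos.2 h) hw

lemma mem_openConeUpTo_of_mem_intrinsicInterior (hv : LinearIndependent ℝ v)
    (hv0 : 0 < (v 0).1) (hvpos : ∀ j, 0 ≤ (v j).1)
    (hx : x ∈ intrinsicInterior ℝ {x : E | ((1 : ℝ), x) ∈ coneGenUpTo v i}) :
    ((1 : ℝ), x) ∈ openConeUpTo v i := by
  obtain ⟨R, hR⟩ := hv.exists_linearMap_sum_smul_eq
  obtain ⟨μ, hμ0, hμi, hxμ⟩ := intrinsicInterior_subset hx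
  refine ⟨μ, ⟨fun j hj => (hμ0 j).lt_of_ne' fun hzero => ?_, hμi⟩, hxμ⟩
  -- the `j`-th coordinate is nonnegative on the slice and vanishes at a relative interior point,
  -- so it vanishes on the whole slice, which however contains points of the open cone
  let f : E →ᵃ[ℝ] ℝ := (LinearMap.proj j ∘ₗ R).toAffineMap.comp atHeightOne
  have hf : ∀ z ∈ {x : E | ((1 : ℝ), x) ∈ coneGenUpTo v i}, 0 ≤ f z :=
    fun z ⟨ν, hν, _, hz⟩ => by simpa [f, hz, hR] using hν j
  obtain ⟨w, hw⟩ := openConeUpTo_nonempty (v := v) (i := i)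
  obtain ⟨ν, hν, hwν⟩ := one_prod_mem_openConeUpTo hv0 hvpos hw
  have := f.eq_zero_of_nonneg_of_mem_intrinsicInterior hf hx (by simp [f, hxμ, hR, hzero])
    (openConeUpTo_subset_coneGenUpTo ⟨ν, hν, hwν⟩)
  simp only [f, AffineMap.comp_apply, atHeightOne_apply, LinearMap.coe_toAffineMap,
    LinearMap.comp_apply, hwν, hR, LinearMap.coe_proj, Function.eval] at this
  exact (hν.1 j hj).ne' this

theorem exists_mem_intrinsicInterior_slice_iff [FiniteDimensional ℝ E]
    (hv : LinearIndependent ℝ v) (hv0 : 0 < (v 0).1) (hvpos : ∀ j, 0 ≤ (v j).1)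
    (ℓ : ℝ × E →ₗ[ℝ] ℝ) :
    (∃ x ∈ intrinsicInterior ℝ {x : E | ((1 : ℝ), x) ∈ coneGenUpTo v i}, ℓ ((1 : ℝ), x) ≤ 0) ↔
      ∃ μ, IsPosUpTo i μ ∧ ∑ j, μ j * ℓ (v j) ≤ 0 := by
  constructor
  · rintro ⟨x, hx, hℓx⟩
    obtain ⟨μ, hμ, hxμ⟩ := mem_openConeUpTo_of_mem_intrinsicInterior hv hv0 hvpos hx
    exact ⟨μ, hμ, by simpa [hxμ] using hℓx⟩
  · rintro ⟨μ, hμ, hℓ⟩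
    set w := ∑ j, μ j • v j
    have hw : w ∈ openConeUpTo v i := ⟨μ, hμ, rfl⟩
    have hw1 := fst_pos_of_mem_openConeUpTo hv0 hvpos hw
    refine ⟨w.1⁻¹ • w.2, mem_intrinsicInterior_of_mem_openConeUpTo hv
      (one_prod_mem_openConeUpTo hv0 hvpos hw), ?_⟩
    rw [one_prod_eq_inv_smul hw1.ne', map_smul, smul_eq_mul]
    exact mul_nonpos_of_nonneg_of_nonpos (inv_nonneg.2 hw1.le) (by simpa [w] using hℓ)

end PositiveHeight

def pairELeft {n : ℕ} (a : ℝ × (Fin n → ℝ)) : (ℝ × (Fin n → ℝ)) →ₗ[ℝ] ℝ :=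
  a.1 • LinearMap.fst ℝ ℝ _ + ∑ t, a.2 t • (LinearMap.proj t ∘ₗ LinearMap.snd ℝ ℝ _)

@[simp]
lemma pairELeft_apply {n : ℕ} (a w : ℝ × (Fin n → ℝ)) : pairELeft a w = pairE w a := by
  simp [pairELeft, pairE, mul_comm]

theorem halfspace_nbhd_iff_lex_nonpos_general
    (n k : ℕ)
    (v : Fin (k + 1) → ℝ × (Fin n → ℝ)) (hv : LinearIndependent ℝ v)
    (hvpos : ∀ i, 0 ≤ (v i).1) (hv0 : 0 < (v 0).1)
    (P : ℕ → Set (Fin n → ℝ))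
    (hP : ∀ i, P i = {x : Fin n → ℝ | ((1 : ℝ), x) ∈ coneGenUpTo v i})
    (γ : ℝ) (u : Fin n → ℤ) :
    (∀ i ≤ k, ({x : Fin n → ℝ | γ + pairZ x u ≤ 0} ∩
        intrinsicInterior ℝ (P i)).Nonempty) ↔
      toLex (fun i : Fin (k + 1) => pairE (v i) (γ, fun t => (u t : ℝ))) ≤
        toLex (0 : Fin (k + 1) → ℝ) := by
  have hmeet (i : ℕ) : ({x : Fin n → ℝ | γ + pairZ x u ≤ 0} ∩ intrinsicInterior ℝ (P i)).Nonempty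
      ↔ ∃ μ, IsPosUpTo i μ ∧ ∑ j, μ j * pairE (v j) (γ, fun t => (u t : ℝ)) ≤ 0 := by
    have := exists_mem_intrinsicInterior_slice_iff (i := i) hv hv0 hvpos
      (pairELeft (γ, fun t => (u t : ℝ)))
    simp only [pairELeft_apply] at this
    rw [hP i, ← this]
    simp [Set.Nonempty, pairE, pairZ, and_comm]
  simp only [toLex_le_zero_iff_forall_exists_isPosUpTo, hmeet, Nat.lt_succ_iff]

/-- For a flag of polyhedra obtained by slicing a simplicial flag of cones (whose
first generator has positive first coordinate), a `Γ`-rational half-space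
`{x | γ + ⟨x,u⟩ ≤ 0}` meets the relative interior of every member of the flag
iff `(⟨v 0,(γ,u)⟩, …, ⟨v k,(γ,u)⟩) ≤_lex 0`. -/
theorem halfspace_nbhd_iff_lex_nonpos
    (n k : ℕ) (hn : 1 ≤ n) (Γ : AddSubgroup ℝ) (hΓ : Γ ≠ ⊥)
    (v : Fin (k + 1) → ℝ × (Fin n → ℝ)) (hv : LinearIndependent ℝ v)
    (hvpos : ∀ i, 0 ≤ (v i).1) (hv0 : 0 < (v 0).1)
    (P : ℕ → Set (Fin n → ℝ))
    (hP : ∀ i, P i = {x : Fin n → ℝ | ((1 : ℝ), x) ∈ coneGenUpTo v i})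
    (γ : ℝ) (hγ : γ ∈ Γ) (u : Fin n → ℤ) :
    (∀ i ≤ k, ({x : Fin n → ℝ | γ + pairZ x u ≤ 0} ∩
        intrinsicInterior ℝ (P i)).Nonempty) ↔
      toLex (fun i : Fin (k + 1) => pairE (v i) (γ, fun t => (u t : ℝ))) ≤
        toLex (0 : Fin (k + 1) → ℝ) :=
  halfspace_nbhd_iff_lex_nonpos_general n k v hv hvpos hv0 P hP γ u
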